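/- For every β ∈ (0,∞), c̃ ∈ (0,∞), Q ∈ ℝ^K, Q* ∈ ℝ^K, P ∈ (0,∞)^K and σ ∈ (0,∞)^K, the limit as α → 0+ of D^{new}_{φ_{α,β,c̃}, P, σ}(Q,Q*) equals c̃·β·Σ_{k=1}^K |q_k − q_k*| / σ_k, a multiple of the weighted ℓ₁-distance between Q and Q*. -/

import Mathlib

/-- The generator φ_{α,β,c̃} from Broniatowski & Stummer. -/
noncomputable def phi (α β c t : ℝ) : ℝ :=
  if t = 1 then 0
  else c * α * (Real.sqrt (1 + β ^ 2 * ((1 - t) / α) ^ 2) - 1 +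
    Real.log (2 * (Real.sqrt (1 + β ^ 2 * ((1 - t) / α) ^ 2) - 1) /
      (β ^ 2 * ((1 - t) / α) ^ 2)))

/-- Scaled shift divergence D^{new}_{φ,P,σ}(Q,Q*) = Σ_k p_k · φ((q_k − q*_k)/(p_k σ_k) + 1). -/
noncomputable def Dnew (K : ℕ) (φ : ℝ → ℝ) (P σ Q Qs : Fin K → ℝ) : ℝ :=
  ∑ k, P k * φ ((Q k - Qs k) / (P k * σ k) + 1)

open Filter Real Set

lemma phi_eq (β c u : ℝ) (hβ : 0 < β) (hu : u ≠ 0) {α : ℝ} (hα : 0 < α) :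
    phi α β c (1 - u) = c * (Real.sqrt (α^2 + β^2*u^2) - α
      + α * Real.log 2 + α * Real.log α - α * Real.log (Real.sqrt (α^2+β^2*u^2) + α)) := by
  have h1 : (1 : ℝ) - u ≠ 1 := by intro h; apply hu; linarith
  set S := Real.sqrt (α^2 + β^2*u^2) with hSdef
  have hS2 : S^2 = α^2 + β^2*u^2 := Real.sq_sqrt (by positivity)
  have hS : 0 < S := Real.sqrt_pos.2 (by positivity)
  have hSα' : α < S := by nlinarith [mul_pos hβ hβ, mul_pos (abs_pos.2 hu) (abs_pos.2 hu), sq_abs u, sq_abs β]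
  have hsqrt : Real.sqrt (1 + β ^ 2 * ((1 - (1 - u)) / α) ^ 2) = S / α := by
    rw [show 1 + β ^ 2 * ((1 - (1 - u)) / α) ^ 2 = (α^2 + β^2*u^2) / α^2 by field_simp; ring]
    rw [Real.sqrt_div (by positivity), Real.sqrt_sq hα.le]
  have harg : 2 * (S / α - 1) / (β ^ 2 * ((1 - (1 - u)) / α) ^ 2) = 2 * α / (S + α) := by
    have hne : S + α ≠ 0 := by positivity
    field_simp
    nlinarith [hS2]
  have hlog : Real.log (2 * α / (S + α)) = Real.log 2 + Real.log α - Real.log (S + α) := by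
    rw [Real.log_div (by positivity) (by positivity), Real.log_mul (by norm_num) hα.ne']
  rw [phi, if_neg h1, hsqrt, harg, hlog]
  field_simp
  ring

lemma phi_limit (β c u : ℝ) (hβ : 0 < β) (hu : u ≠ 0) :
    Tendsto (fun α => phi α β c (1 - u)) (nhdsWithin 0 (Set.Ioi 0))
      (nhds (c * (β * |u|))) := by
  have hbu : (0:ℝ) < β^2*u^2 := by positivity
  have hS0 : Real.sqrt ((0:ℝ)^2 + β^2*u^2) = β * |u| := by
    rw [show (0:ℝ)^2 + β^2*u^2 = (β*|u|)^2 by rw [mul_pow, sq_abs]; ring,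
      Real.sqrt_sq (by positivity)]
  have hSc : Tendsto (fun α : ℝ => Real.sqrt (α^2 + β^2*u^2)) (nhdsWithin 0 (Set.Ioi 0))
      (nhds (β * |u|)) := by
    have : Continuous fun α : ℝ => Real.sqrt (α^2 + β^2*u^2) := by fun_prop
    have h := (this.tendsto 0).mono_left (nhdsWithin_le_nhds : nhdsWithin (0:ℝ) (Set.Ioi 0) ≤ nhds 0)
    rwa [hS0] at h
  have hid : Tendsto (fun α : ℝ => α) (nhdsWithin 0 (Set.Ioi 0)) (nhds 0) :=
    tendsto_id.mono_left nhdsWithin_le_nhds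
  have hαlogα : Tendsto (fun α : ℝ => α * Real.log α) (nhdsWithin 0 (Set.Ioi 0)) (nhds 0) := by
    have h := tendsto_log_mul_rpow_nhdsGT_zero (one_pos)
    have h2 : Tendsto (fun x : ℝ => Real.log x * x) (nhdsWithin 0 (Set.Ioi 0)) (nhds 0) := by
      refine h.congr' ?_
      filter_upwards [self_mem_nhdsWithin] with x hx
      rw [Real.rpow_one]
    simpa [mul_comm] using h2
  have hαloglast : Tendsto (fun α : ℝ => α * Real.log (Real.sqrt (α^2+β^2*u^2) + α))
      (nhdsWithin 0 (Set.Ioi 0)) (nhds 0) := by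
    have hlog : Tendsto (fun α : ℝ => Real.log (Real.sqrt (α^2+β^2*u^2) + α))
        (nhdsWithin 0 (Set.Ioi 0)) (nhds (Real.log (β*|u|))) := by
      have : Tendsto (fun α : ℝ => Real.sqrt (α^2+β^2*u^2) + α) (nhdsWithin 0 (Set.Ioi 0))
          (nhds (β*|u|)) := by simpa using hSc.add hid
      exact (Real.continuousAt_log (by positivity)).tendsto.comp this
    simpa using hid.mul hlog
  have htot : Tendsto (fun α : ℝ => c * (Real.sqrt (α^2 + β^2*u^2) - α
      + α * Real.log 2 + α * Real.log α - α * Real.log (Real.sqrt (α^2+β^2*u^2) + α)))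
      (nhdsWithin 0 (Set.Ioi 0)) (nhds (c * (β * |u|))) := by
    have := (((hSc.sub hid).add (hid.mul (tendsto_const_nhds (x := Real.log 2)))).add hαlogα).sub hαloglast
    simpa using ((tendsto_const_nhds (x := c)).mul this)
  refine htot.congr' ?_
  filter_upwards [self_mem_nhdsWithin] with α hα
  exact (phi_eq β c u hβ hu hα).symm

theorem stmt_5 (K : ℕ) (β c : ℝ) (hβ : 0 < β) (hc : 0 < c)
    (Q Qs : Fin K → ℝ) (P σ : Fin K → ℝ) (hP : ∀ k, 0 < P k) (hσ : ∀ k, 0 < σ k) :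
    Filter.Tendsto (fun α => Dnew K (phi α β c) P σ Q Qs) (nhdsWithin 0 (Set.Ioi 0))
      (nhds (c * β * ∑ k, |Q k - Qs k| / σ k)) := by
  unfold Dnew
  rw [Finset.mul_sum]
  apply tendsto_finset_sum
  intro k _
  by_cases hd : Q k - Qs k = 0
  · have : (fun α => P k * phi α β c ((Q k - Qs k) / (P k * σ k) + 1))
        = fun _ => (0:ℝ) := by
      funext α
      rw [hd]
      simp [phi]
    rw [this, hd]
    simpa using tendsto_const_nhds
  · set u : ℝ := -((Q k - Qs k) / (P k * σ k)) with hu_def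
    have hu : u ≠ 0 := by
      simp only [hu_def, neg_ne_zero, div_ne_zero_iff]
      exact ⟨hd, (mul_pos (hP k) (hσ k)).ne'⟩
    have heq : ∀ α : ℝ, P k * phi α β c ((Q k - Qs k) / (P k * σ k) + 1)
        = P k * phi α β c (1 - u) := by
      intro α; rw [hu_def]; ring_nf
    have hval : P k * (c * (β * |u|)) = c * β * (|Q k - Qs k| / σ k) := by
      have hpn := (hP k).ne'
      have hsn := (hσ k).ne'
      rw [hu_def, abs_neg, abs_div, abs_of_pos (mul_pos (hP k) (hσ k))]
      field_simp
    have := ((tendsto_const_nhds (x := P k)).mul (phi_limit β c u hβ hu))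
    rw [hval] at this
    exact this.congr fun α => (heq α).symm
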